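/- Let X = {0,1}. The family of functions (f_n : X^n → {0,1})_{n≥1} defined by f_n(x) = 1 if |{i : x_i = 1}| ≥ 10 + |{i : x_i = 0}| and f_n(x) = 0 otherwise, is not computable with infinite memory. -/

import Mathlib

/-- A finite bidirectional connected network on `n` nodes, with port labelings:
each node `i` has a bijection between its neighbors and the port numbers
`{0, …, deg(i) - 1}`. -/
structure PortNetwork (n : ℕ) where
  adj : Fin n → Fin n → Bool
  symm : ∀ i j, adj i j → adj j i
  loopless : ∀ i, ¬ adj i i
  connected : ∀ i j : Fin n, Relation.ReflTransGen (fun a b => adj a b) i j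
  port : ∀ i : Fin n, {j // adj i j} ≃ Fin (Fintype.card {j // adj i j})

/-- The degree of node `i`. -/
def PortNetwork.deg {n : ℕ} (N : PortNetwork n) (i : Fin n) : ℕ :=
  Fintype.card {j // N.adj i j}

/-- An algorithm: a family of transition functions
`A_d : X × Z_d × Y × M^d → Z_d × Y × M^d`, together with the distinguished
initial ("∅") elements of `Z_d`, `Y`, `M`. -/
structure Algorithm (X Y M : Type) (Z : ℕ → Type) where
  trans : ∀ d : ℕ, X → Z d → Y → (Fin d → M) → Z d × Y × (Fin d → M)
  z0 : ∀ d, Z d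
  y0 : Y
  m0 : M

/-- The synchronous evolution of the network: `A.run N x t i` is the state
`(z_i(t), y_i(t), (m_{i,p}(t))_p)` of node `i` at time `t`, starting from
initial values `x`.  At each round, node `i` receives through its `k`-th port
the message sent by the neighbor `j_k` on that port, namely the message that
`j_k` put on its own port leading back to `i`. -/
def Algorithm.run {X Y M : Type} {Z : ℕ → Type} (A : Algorithm X Y M Z) {n : ℕ}
    (N : PortNetwork n) (x : Fin n → X) :
    ℕ → ∀ i : Fin n, Z (N.deg i) × Y × (Fin (N.deg i) → M)
  | 0 => fun _ => (A.z0 _, A.y0, fun _ => A.m0)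
  | t + 1 => fun i =>
      A.trans (N.deg i) (x i) (A.run N x t i).1 (A.run N x t i).2.1
        (fun k =>
          let j := (N.port i).symm k
          (A.run N x t j.1).2.2 (N.port j.1 ⟨i, N.symm _ _ j.2⟩))

/-- `y` is the final output of the execution of `A` on the network `N` with
initial values `x`. -/
def Algorithm.FinalOutput {X Y M : Type} {Z : ℕ → Type} (A : Algorithm X Y M Z) {n : ℕ}
    (N : PortNetwork n) (x : Fin n → X) (y : Y) : Prop :=
  ∃ t', ∀ t, t' ≤ t → ∀ i, (A.run N x t i).2.1 = y

/-- A family of functions `(f_n : X^n → Y)_{n ≥ 1}` is computable if there is an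
algorithm with `Y`, `M` and all `Z_d` finite which, on every connected network
with ports and every input, produces the final output `f_n(x)`. -/
def ComputableFamily {X Y : Type} (f : ∀ n, (Fin n → X) → Y) : Prop :=
  ∃ (M : Type) (Z : ℕ → Type) (A : Algorithm X Y M Z),
    Finite Y ∧ Finite M ∧ (∀ d, Finite (Z d)) ∧
    ∀ n, 0 < n → ∀ (N : PortNetwork n) (x : Fin n → X),
      A.FinalOutput N x (f n x)

/-- Computability with infinite memory: `Y` and the `Z_d` are allowed to be
countable (the message alphabet `M` stays finite). -/
def ComputableWithInfiniteMemory {X Y : Type} (f : ∀ n, (Fin n → X) → Y) : Prop :=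
  ∃ (M : Type) (Z : ℕ → Type) (A : Algorithm X Y M Z),
    Countable Y ∧ Finite M ∧ (∀ d, Countable (Z d)) ∧
    ∀ n, 0 < n → ∀ (N : PortNetwork n) (x : Fin n → X),
      A.FinalOutput N x (f n x)

/-!
In a network where every node has degree `d` and the neighbour behind port `k` always sees the
node back through port `σ k`, a constant input makes all nodes evolve in lockstep, and their
common state sequence depends only on `(d, σ)`, not on the size of the network. The cycles on
3 and 12 nodes, labelled by "port 0 leads to `i + 1`, port 1 to `i - 1`", are such networks
with `d = 2` and `σ = Fin.rev`. So any algorithm has the same final output on both when all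
inputs are `1`, while the function to be computed is `0` on the first and `1` on the second.
-/

open SimpleGraph

namespace PortNetwork

variable {n : ℕ} (N : PortNetwork n)

def backPort (i : Fin n) (k : Fin (N.deg i)) : Fin (N.deg ((N.port i).symm k)) :=
  N.port _ ⟨i, N.symm _ _ ((N.port i).symm k).2⟩

structure IsPortRegular (d : ℕ) (σ : Fin d → Fin d) : Prop where
  deg_eq : ∀ i, N.deg i = d
  backPort_eq : ∀ i k, Fin.cast (deg_eq _) (N.backPort i k) = σ (Fin.cast (deg_eq i) k)

end PortNetwork

namespace Algorithm

variable {X Y M : Type} {Z : ℕ → Type} (A : Algorithm X Y M Z)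

/-- The common execution of the nodes of a port-regular network with constant input `x`. -/
def uniformRun (d : ℕ) (σ : Fin d → Fin d) (x : X) : ℕ → Z d × Y × (Fin d → M)
  | 0 => (A.z0 d, A.y0, fun _ => A.m0)
  | t + 1 =>
      let s := uniformRun d σ x t
      A.trans d x s.1 s.2.1 (fun k => s.2.2 (σ k))

section HEq

variable {d d' : ℕ} {s : Z d' × Y × (Fin d' → M)} {u : Z d × Y × (Fin d → M)}

lemma init_heq (h : d' = d) :
    HEq ((A.z0 d', A.y0, fun _ => A.m0) : Z d' × Y × (Fin d' → M))
      (A.z0 d, A.y0, fun _ : Fin d => A.m0) := by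
  subst h; rfl

lemma output_eq_of_heq (h : d' = d) (hs : HEq s u) : s.2.1 = u.2.1 := by
  subst h; rw [eq_of_heq hs]

lemma message_eq_of_heq (h : d' = d) (hs : HEq s u) (q : Fin d') :
    s.2.2 q = u.2.2 (Fin.cast h q) := by
  subst h; rw [eq_of_heq hs]; rfl

lemma trans_heq_of_heq (h : d' = d) (hs : HEq s u) (x : X) {m : Fin d' → M} {m' : Fin d → M}
    (hm : ∀ k, m k = m' (Fin.cast h k)) :
    HEq (A.trans d' x s.1 s.2.1 m) (A.trans d x u.1 u.2.1 m') := by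
  subst h; obtain rfl := eq_of_heq hs; obtain rfl : m = m' := funext hm; rfl

end HEq

variable {n d : ℕ} {N : PortNetwork n} {σ : Fin d → Fin d}

lemma run_heq_uniformRun (hN : N.IsPortRegular d σ) (x : X) (t : ℕ) (i : Fin n) :
    HEq (A.run N (fun _ => x) t i) (A.uniformRun d σ x t) := by
  induction t generalizing i with
  | zero => exact A.init_heq (hN.deg_eq i)
  | succ t ih =>
    refine A.trans_heq_of_heq (hN.deg_eq i) (ih i) x fun k => ?_
    show (A.run N _ t _).2.2 (N.backPort i k) = (A.uniformRun d σ x t).2.2 _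
    rw [message_eq_of_heq (hN.deg_eq _) (ih _), hN.backPort_eq]

lemma output_run_eq_uniformRun (hN : N.IsPortRegular d σ) (x : X) (t : ℕ) (i : Fin n) :
    (A.run N (fun _ => x) t i).2.1 = (A.uniformRun d σ x t).2.1 :=
  output_eq_of_heq (hN.deg_eq i) (A.run_heq_uniformRun hN x t i)

lemma finalOutput_eq_of_isPortRegular {n' : ℕ} [NeZero n] [NeZero n'] {N' : PortNetwork n'}
    (hN : N.IsPortRegular d σ) (hN' : N'.IsPortRegular d σ) {x : X} {y y' : Y}
    (h : A.FinalOutput N (fun _ => x) y) (h' : A.FinalOutput N' (fun _ => x) y') : y = y' := by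
  obtain ⟨t, ht⟩ := h
  obtain ⟨t', ht'⟩ := h'
  calc y = (A.run N (fun _ => x) (max t t') 0).2.1 := (ht _ (le_max_left t t') 0).symm
    _ = (A.run N' (fun _ => x) (max t t') 0).2.1 := by
      rw [A.output_run_eq_uniformRun hN, A.output_run_eq_uniformRun hN']
    _ = y' := ht' _ (le_max_right t t') 0

end Algorithm

namespace PortNetwork

variable {k : ℕ}

def cycleStep : Fin 2 → Fin (k + 3) := ![1, -1]

lemma cycleStep_rev (p : Fin 2) : cycleStep (Fin.rev p) = -cycleStep (k := k) p := by
  fin_cases p <;> simp [cycleStep]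

lemma cycleStep_injective : Function.Injective (cycleStep (k := k)) := by
  intro p q h
  fin_cases p <;> fin_cases q <;> simp_all [cycleStep, Fin.ext_iff, Fin.val_neg]

lemma cycleGraph_adj_iff_exists_cycleStep (i j : Fin (k + 3)) :
    (cycleGraph (k + 3)).Adj i j ↔ ∃ p, j = i + cycleStep p := by
  rw [cycleGraph_adj, Fin.exists_fin_two]
  simp only [cycleStep, Matrix.cons_val_zero, Matrix.cons_val_one]
  grind

noncomputable def cycleNeighborEquiv (i : Fin (k + 3)) :
    Fin 2 ≃ {j // decide ((cycleGraph (k + 3)).Adj i j)} :=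
  Equiv.ofBijective
    (fun p => ⟨i + cycleStep p,
      by simpa using (cycleGraph_adj_iff_exists_cycleStep i _).2 ⟨p, rfl⟩⟩)
    ⟨fun p q h => cycleStep_injective (add_left_cancel (congrArg Subtype.val h)),
     fun ⟨j, hj⟩ => by
       obtain ⟨p, rfl⟩ := (cycleGraph_adj_iff_exists_cycleStep i j).1 (by simpa using hj)
       exact ⟨p, rfl⟩⟩

lemma cycleNeighborEquiv_symm_add_cycleStep (i : Fin (k + 3)) (p : Fin 2) (h) :
    (cycleNeighborEquiv (i + cycleStep p)).symm ⟨i, h⟩ = Fin.rev p := by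
  rw [Equiv.symm_apply_eq]
  exact Subtype.ext
    (show i = i + cycleStep p + cycleStep (Fin.rev p) by rw [cycleStep_rev, add_neg_cancel_right])

lemma card_cycleNeighbors (i : Fin (k + 3)) :
    Fintype.card {j // decide ((cycleGraph (k + 3)).Adj i j)} = 2 :=
  (Fintype.card_congr (cycleNeighborEquiv i)).symm.trans (Fintype.card_fin 2)

variable (k) in
noncomputable def cycle : PortNetwork (k + 3) where
  adj i j := decide ((cycleGraph (k + 3)).Adj i j)
  symm i j h := by simpa [adj_comm] using h
  loopless i := by simp
  connected i j := by
    simpa [reachable_iff_reflTransGen] using (cycleGraph_connected (n := k + 2)).preconnected i j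
  port i := (cycleNeighborEquiv i).symm.trans (finCongr (card_cycleNeighbors i).symm)

variable (k) in
lemma cycle_isPortRegular : (cycle k).IsPortRegular 2 Fin.rev where
  deg_eq := card_cycleNeighbors
  backPort_eq i p := Fin.ext <| congrArg Fin.val <|
    cycleNeighborEquiv_symm_add_cycleStep i (Fin.cast (card_cycleNeighbors i) p) _

end PortNetwork

/-- deciding whether the number of nodes with value 1 is at least
10 plus the number of nodes with value 0 is not computable with infinite
memory. -/
theorem ten_plus_comparison_not_computable :
    ¬ ComputableWithInfiniteMemory
      (fun n (x : Fin n → Fin 2) =>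
        if 10 + (Finset.univ.filter fun i => x i = 0).card ≤
            (Finset.univ.filter fun i => x i = 1).card
        then (1 : Fin 2) else 0) := by
  rintro ⟨M, Z, A, -, -, -, hA⟩
  have h3 := hA 3 (by norm_num) (PortNetwork.cycle 0) fun _ => 1
  have h12 := hA 12 (by norm_num) (PortNetwork.cycle 9) fun _ => 1
  exact absurd (A.finalOutput_eq_of_isPortRegular (PortNetwork.cycle_isPortRegular 0)
    (PortNetwork.cycle_isPortRegular 9) h3 h12) (by decide)
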